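/- Lemma 3.2 (Grohe's soundness lemma): Let k ≥ 2, K = k(k−1)/2, let A be a connected finite σ-structure that is a core, μ a minor map from the (k × K)-grid onto A, G a finite simple graph, and M = M(A, μ, G) the structure from Grohe's construction. If there is a homomorphism from A to M, then G contains a clique of size k. -/

import Mathlib

/-!
Since `A` is a finite core, every endomorphism of `A` is an automorphism whose inverse is again
an endomorphism. Composing a homomorphism `h : A → M` with the inverse of the endomorphism
`Π ∘ h` therefore gives a homomorphism `h'` with `Π ∘ h' = id`. Then `h'` sends the branch set
`μ(i, p)` into the `(i, p)`-part of `M`, and the defining constraints of `M`, propagated along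
the connected branch sets and the rows and columns of the grid, show that the vertex coordinate
of `h'` depends only on the row `i` and the edge coordinate only on the column `p`. The
resulting vertices `w i` and edges `e p` satisfy `w i ∈ e p ↔ i ∈ ρ(p)`; since every pair
`{i, j}` is some `ρ(p)`, the `w i` are pairwise adjacent (or, for `k = 2`, `e p` is itself a
`2`-clique).
-/

/-- A relational structure over signature `σ` with arities `ar` and universe `A`. -/
structure RelStruct (σ : Type) (ar : σ → ℕ) (A : Type) where
  rel : ∀ R : σ, Set (Fin (ar R) → A)

/-- `f` is a homomorphism of relational structures from `SA` to `SB`. -/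
def IsHom {σ : Type} {ar : σ → ℕ} {A B : Type}
    (SA : RelStruct σ ar A) (SB : RelStruct σ ar B) (f : A → B) : Prop :=
  ∀ (R : σ) (t : Fin (ar R) → A), t ∈ SA.rel R → (fun j => f (t j)) ∈ SB.rel R

/-- The Gaifman (primal) graph of a relational structure. -/
def Gaifman {σ : Type} {ar : σ → ℕ} {A : Type} (SA : RelStruct σ ar A) : SimpleGraph A where
  Adj a b := a ≠ b ∧ ∃ (R : σ) (t : Fin (ar R) → A),
      t ∈ SA.rel R ∧ a ∈ Set.range t ∧ b ∈ Set.range t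
  symm := by
    constructor
    rintro a b ⟨hab, R, t, ht, ha, hb⟩
    exact ⟨hab.symm, R, t, ht, hb, ha⟩
  loopless := by
    constructor
    rintro a ⟨ha, -⟩
    exact ha rfl

/-- `ρ` is a grid-like mapping from the vertex set of the graph `G` onto `[k] × [k]`:
it is surjective and all the preimages of its two components are connected in `G`. -/
def GridLikeOn {C : Type} (G : SimpleGraph C) (k : ℕ) (ρ : C → Fin k × Fin k) : Prop :=
  Function.Surjective ρ ∧ ∀ i : Fin k,
    (G.induce {c | (ρ c).1 = i}).Connected ∧
    (G.induce {c | (ρ c).2 = i}).Connected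

/-- `ρ` is a grid-like mapping from the structure `SC` onto `[k] × [k]`. -/
def GridLike {σ : Type} {ar : σ → ℕ} {C : Type}
    (SC : RelStruct σ ar C) (k : ℕ) (ρ : C → Fin k × Fin k) : Prop :=
  GridLikeOn (Gaifman SC) k ρ

/-- `G` contains a clique of size `k`. -/
def HasNClique {V : Type} (G : SimpleGraph V) (k : ℕ) : Prop :=
  ∃ s : Finset V, G.IsNClique k s

/-- The `(k × l)`-grid graph: vertices `[k] × [l]`, with `(i,j)` and `(i',j')`
adjacent iff `|i - i'| + |j - j'| = 1`. -/
def gridGraph (k l : ℕ) : SimpleGraph (Fin k × Fin l) where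
  Adj p q := ((p.1 : ℤ) - (q.1 : ℤ)).natAbs + ((p.2 : ℤ) - (q.2 : ℤ)).natAbs = 1
  symm := by
    constructor
    intro p q h
    omega
  loopless := by
    constructor
    intro p h
    simp at h

/-- `μ` is a minor map from the graph `GH` to the graph `GG`. -/
def IsMinorMap {H G : Type} (GH : SimpleGraph H) (GG : SimpleGraph G) (μ : H → Set G) : Prop :=
  (∀ v, (μ v).Nonempty ∧ (GG.induce (μ v)).Connected) ∧
  (∀ v w, v ≠ w → Disjoint (μ v) (μ w)) ∧
  (∀ v w, GH.Adj v w → ∃ v' ∈ μ v, ∃ w' ∈ μ w, GG.Adj v' w')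

/-- The universe of the structure `M = M(A, μ, G)` of Grohe's construction: tuples
`(v, e, i, p, a)` with `v` a vertex of `G`, `e` an edge of `G`, `i ∈ [k]`, `p ∈ [K]`,
`v ∈ e ↔ i ∈ ρ₂(p)`, and `a ∈ μ(i, p)`. -/
structure MElem {V A : Type} (G : SimpleGraph V) (k K : ℕ)
    (ρ₂ : Fin K ≃ {s : Finset (Fin k) // s.card = 2}) (μ : Fin k × Fin K → Set A) where
  v : V
  e : Sym2 V
  i : Fin k
  p : Fin K
  a : A
  he : e ∈ G.edgeSet
  hvi : v ∈ e ↔ i ∈ (ρ₂ p).1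
  ha : a ∈ μ (i, p)

/-- The structure `M = M(A, μ, G)` of Grohe's construction. -/
def MStruct {σ : Type} {ar : σ → ℕ} {V A : Type} (SA : RelStruct σ ar A)
    (G : SimpleGraph V) (k K : ℕ)
    (ρ₂ : Fin K ≃ {s : Finset (Fin k) // s.card = 2})
    (μ : Fin k × Fin K → Set A) :
    RelStruct σ ar (MElem G k K ρ₂ μ) where
  rel R := {t |
    (fun j => (t j).a) ∈ SA.rel R ∧
    ∀ j j' : Fin (ar R),
      ((t j).i = (t j').i → (t j).v = (t j').v) ∧
      ((t j).p = (t j').p → (t j).e = (t j').e)}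

/-- A substructure of the structure `SA`: a subset of the universe together with
subsets of the relations all of whose tuples lie in the subset. -/
structure Substruct {σ : Type} {ar : σ → ℕ} {A : Type} (SA : RelStruct σ ar A) where
  carrier : Set A
  rel : ∀ R : σ, Set (Fin (ar R) → A)
  rel_sub : ∀ R : σ, rel R ⊆ SA.rel R
  mem_carrier : ∀ R : σ, ∀ t ∈ rel R, ∀ j, t j ∈ carrier

/-- A substructure is proper if it differs from the whole structure. -/
def Substruct.Proper {σ : Type} {ar : σ → ℕ} {A : Type} {SA : RelStruct σ ar A}
    (S : Substruct SA) : Prop :=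
  S.carrier ≠ Set.univ ∨ ∃ R : σ, S.rel R ≠ SA.rel R

/-- `f` is a homomorphism from `SA` to the substructure `S` of `SA`. -/
def IsHomToSub {σ : Type} {ar : σ → ℕ} {A : Type} {SA : RelStruct σ ar A}
    (S : Substruct SA) (f : A → A) : Prop :=
  (∀ a, f a ∈ S.carrier) ∧ ∀ (R : σ) (t : Fin (ar R) → A),
    t ∈ SA.rel R → (fun j => f (t j)) ∈ S.rel R

/-- A structure is a core if it admits no homomorphism to a proper substructure of itself. -/
def IsCore {σ : Type} {ar : σ → ℕ} {A : Type} (SA : RelStruct σ ar A) : Prop :=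
  ∀ S : Substruct SA, (∃ f, IsHomToSub S f) → ¬ S.Proper

namespace SimpleGraph

theorem Preconnected.eq_of_forall_adj {V X : Type} {G : SimpleGraph V} (hG : G.Preconnected)
    {f : V → X} (hf : ∀ a b, G.Adj a b → f a = f b) (a b : V) : f a = f b :=
  (hG a b).elim fun w => by
    induction w with
    | nil => rfl
    | cons hadj _ ih => exact (hf _ _ hadj).trans ih

theorem hasNClique_of_pairwise_adj {V : Type} {G : SimpleGraph V} {k : ℕ} {w : Fin k → V}
    (hw : Pairwise fun i j => G.Adj (w i) (w j)) : HasNClique G k := by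
  let φ : completeGraph (Fin k) →g G := ⟨w, fun hij => hw hij⟩
  have := IsContained.not_cliqueFree ⟨⟨φ, Hom.injective_of_top_hom φ⟩⟩
  simpa only [HasNClique, CliqueFree, not_forall, not_not] using this

end SimpleGraph

open SimpleGraph

theorem hasNClique_two_of_mem_edgeSet {V : Type} {G : SimpleGraph V} {e : Sym2 V}
    (he : e ∈ G.edgeSet) : HasNClique G 2 := by
  induction e using Sym2.ind with
  | h x y =>
    refine hasNClique_of_pairwise_adj (w := ![x, y]) fun i j hij => ?_
    fin_cases i <;> fin_cases j <;> simp_all [G.adj_symm he]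

section Incidence

variable {V P : Type} {G : SimpleGraph V} {k : ℕ} (ρ₂ : P ≃ {s : Finset (Fin k) // s.card = 2})
  {w : Fin k → V} {e : P → Sym2 V}

theorem exists_index_eq_pair {i j : Fin k} (hij : i ≠ j) : ∃ p, (ρ₂ p).1 = {i, j} :=
  ⟨ρ₂.symm ⟨{i, j}, Finset.card_pair hij⟩, by simp⟩

theorem injective_of_incidence (hk : 3 ≤ k) (hwe : ∀ i p, w i ∈ e p ↔ i ∈ (ρ₂ p).1) :
    Function.Injective w := by
  intro i j hwij
  by_contra hij
  obtain ⟨l, -, hl⟩ := Finset.exists_mem_notMem_of_card_lt_card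
    (s := {i, j}) (t := Finset.univ) (by simpa using (Finset.card_le_two).trans_lt hk)
  obtain ⟨p, hp⟩ := exists_index_eq_pair ρ₂ (i := i) (j := l) (by rintro rfl; simp at hl)
  have hi : w i ∈ e p := (hwe i p).2 (by simp [hp])
  have hj : j ∉ (ρ₂ p).1 := by
    simp only [hp, Finset.mem_insert, Finset.mem_singleton, not_or]
    exact ⟨Ne.symm hij, by rintro rfl; simp at hl⟩
  exact hj ((hwe j p).1 (hwij ▸ hi))

theorem hasNClique_of_incidence (hk : 2 ≤ k) (he : ∀ p, e p ∈ G.edgeSet)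
    (hwe : ∀ i p, w i ∈ e p ↔ i ∈ (ρ₂ p).1) : HasNClique G k := by
  rcases hk.eq_or_lt with rfl | hk
  · obtain ⟨p, -⟩ := exists_index_eq_pair ρ₂ (i := 0) (j := 1) (by decide)
    exact hasNClique_two_of_mem_edgeSet (he p)
  refine hasNClique_of_pairwise_adj (w := w) fun i j hij => ?_
  obtain ⟨p, hp⟩ := exists_index_eq_pair ρ₂ hij
  have hne : w i ≠ w j := (injective_of_incidence ρ₂ hk hwe).ne hij
  have hep : e p = s(w i, w j) :=
    (Sym2.mem_and_mem_iff hne).1 ⟨(hwe i p).2 (by simp [hp]), (hwe j p).2 (by simp [hp])⟩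
  simpa [hep] using he p

end Incidence

theorem gridGraph_induce_fst_preconnected (k l : ℕ) (i : Fin k) :
    ((gridGraph k l).induce {v | v.1 = i}).Preconnected := by
  let φ : pathGraph l →g (gridGraph k l).induce {v | v.1 = i} :=
    ⟨fun p => ⟨(i, p), rfl⟩, fun {p q} hpq => by
      rw [pathGraph_adj] at hpq
      change ((i : ℤ) - i).natAbs + ((p : ℤ) - q).natAbs = 1
      omega⟩
  refine (pathGraph_preconnected l).map φ ?_
  rintro ⟨⟨i', p⟩, rfl : i' = i⟩
  exact ⟨p, rfl⟩

theorem gridGraph_induce_snd_preconnected (k l : ℕ) (p : Fin l) :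
    ((gridGraph k l).induce {v | v.2 = p}).Preconnected := by
  let φ : pathGraph k →g (gridGraph k l).induce {v | v.2 = p} :=
    ⟨fun i => ⟨(i, p), rfl⟩, fun {i j} hij => by
      rw [pathGraph_adj] at hij
      change ((i : ℤ) - j).natAbs + ((p : ℤ) - p).natAbs = 1
      omega⟩
  refine (pathGraph_preconnected k).map φ ?_
  rintro ⟨⟨i, p'⟩, rfl : p' = p⟩
  exact ⟨i, rfl⟩

namespace IsMinorMap

variable {H α X Y : Type} {GH : SimpleGraph H} {GG : SimpleGraph α} {μ : H → Set α}

theorem eq_of_mem_of_mem (hμ : IsMinorMap GH GG μ) {v w : H} {a : α} (hv : a ∈ μ v)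
    (hw : a ∈ μ w) : v = w := by
  by_contra hvw
  exact Set.disjoint_left.1 (hμ.2.1 v w hvw) hv hw

theorem eq_on_branchSet (hμ : IsMinorMap GH GG μ) {f : α → X} (v : H)
    (hf : ∀ a ∈ μ v, ∀ b ∈ μ v, GG.Adj a b → f a = f b) {a b : α} (ha : a ∈ μ v)
    (hb : b ∈ μ v) : f a = f b :=
  (hμ.1 v).2.preconnected.eq_of_forall_adj (f := fun x : μ v => f x)
    (fun x y hxy => hf x x.2 y y.2 hxy) ⟨a, ha⟩ ⟨b, hb⟩

theorem eq_of_fiber (hμ : IsMinorMap GH GG μ) (π : H → Y)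
    (hπ : ∀ y, (GH.induce {v | π v = y}).Preconnected) {f : α → X}
    (hf : ∀ v w, π v = π w → ∀ a ∈ μ v, ∀ b ∈ μ w, GG.Adj a b → f a = f b)
    {v w : H} {a b : α} (ha : a ∈ μ v) (hb : b ∈ μ w) (hvw : π v = π w) : f a = f b := by
  let rep : H → α := fun u => (hμ.1 u).1.some
  have hrep : ∀ u, rep u ∈ μ u := fun u => (hμ.1 u).1.some_mem
  have hcell : ∀ u, ∀ {c}, c ∈ μ u → f c = f (rep u) := fun u {_} hc =>
    hμ.eq_on_branchSet u (hf u u rfl) hc (hrep u)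
  have hfiber := (hπ (π w)).eq_of_forall_adj (f := fun u => f (rep u.1))
    (fun u u' huu' => by
      obtain ⟨c, hc, c', hc', hcc'⟩ := hμ.2.2 u u' huu'
      rw [← hcell _ hc, ← hcell _ hc']
      exact hf _ _ (u.2.trans u'.2.symm) c hc c' hc' hcc') ⟨v, hvw⟩ ⟨w, rfl⟩
  exact (hcell v ha).trans (hfiber.trans (hcell w hb).symm)

end IsMinorMap

section Core

variable {σ : Type} {ar : σ → ℕ} {A B C : Type} {SA : RelStruct σ ar A}

theorem IsHom.comp {SB : RelStruct σ ar B} {SC : RelStruct σ ar C} {g : B → C} {f : A → B}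
    (hg : IsHom SB SC g) (hf : IsHom SA SB f) : IsHom SA SC (g ∘ f) :=
  fun R t ht => hg R _ (hf R t ht)

def Substruct.image (g : A → A) (hg : IsHom SA SA g) : Substruct SA where
  carrier := Set.range g
  rel R := (fun t => g ∘ t) '' SA.rel R
  rel_sub := by
    rintro R _ ⟨t, ht, rfl⟩
    exact hg R t ht
  mem_carrier := by
    rintro R _ ⟨t, -, rfl⟩ j
    exact ⟨t j, rfl⟩

theorem Substruct.isHomToSub_image (g : A → A) (hg : IsHom SA SA g) :
    IsHomToSub (Substruct.image g hg) g :=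
  ⟨fun a => ⟨a, rfl⟩, fun _ t ht => ⟨t, ht, rfl⟩⟩

theorem IsCore.exists_isHom_rightInverse [Finite A] (hcore : IsCore SA) {g : A → A}
    (hg : IsHom SA SA g) : ∃ g' : A → A, IsHom SA SA g' ∧ Function.RightInverse g' g := by
  have hnp := hcore _ ⟨g, Substruct.isHomToSub_image g hg⟩
  simp only [Substruct.Proper, not_or, not_not, not_exists] at hnp
  obtain ⟨hcarrier, hrel⟩ := hnp
  have hsurj : Function.Surjective g := Set.range_eq_univ.1 hcarrier
  let e := Equiv.ofBijective g ⟨Finite.injective_iff_surjective.2 hsurj, hsurj⟩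
  refine ⟨e.symm, fun R t ht => ?_, e.apply_symm_apply⟩
  rw [← hrel R] at ht
  obtain ⟨t₀, ht₀, rfl⟩ := ht
  convert ht₀ using 1
  exact funext fun j => e.symm_apply_apply (t₀ j)

end Core

section Construction

variable {σ : Type} {ar : σ → ℕ} {A V : Type} {SA : RelStruct σ ar A} {G : SimpleGraph V}
  {k K : ℕ} {ρ₂ : Fin K ≃ {s : Finset (Fin k) // s.card = 2}} {μ : Fin k × Fin K → Set A}

theorem isHom_mStruct_a : IsHom (MStruct SA G k K ρ₂ μ) SA MElem.a := fun _ _ ht => ht.1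

theorem IsHom.mStruct_of_adj {h : A → MElem G k K ρ₂ μ}
    (hh : IsHom SA (MStruct SA G k K ρ₂ μ) h) {a b : A} (hab : (Gaifman SA).Adj a b) :
    ((h a).i = (h b).i → (h a).v = (h b).v) ∧ ((h a).p = (h b).p → (h a).e = (h b).e) := by
  obtain ⟨-, R, t, ht, ⟨j, rfl⟩, ⟨j', rfl⟩⟩ := hab
  exact (hh R t ht).2 j j'

theorem IsCore.exists_isHom_mStruct_section [Finite A] (hcore : IsCore SA)
    {h : A → MElem G k K ρ₂ μ} (hh : IsHom SA (MStruct SA G k K ρ₂ μ) h) :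
    ∃ h' : A → MElem G k K ρ₂ μ, IsHom SA (MStruct SA G k K ρ₂ μ) h' ∧ ∀ a, (h' a).a = a := by
  obtain ⟨g', hg', hinv⟩ := hcore.exists_isHom_rightInverse (isHom_mStruct_a.comp hh)
  exact ⟨h ∘ g', hh.comp hg', hinv⟩

theorem exists_incidence_of_section [Nonempty (Fin k)] [Nonempty (Fin K)]
    (hμ : IsMinorMap (gridGraph k K) (Gaifman SA) μ) {h : A → MElem G k K ρ₂ μ}
    (hh : IsHom SA (MStruct SA G k K ρ₂ μ) h) (hsec : ∀ a, (h a).a = a) :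
    ∃ (w : Fin k → V) (e : Fin K → Sym2 V),
      (∀ p, e p ∈ G.edgeSet) ∧ ∀ i p, w i ∈ e p ↔ i ∈ (ρ₂ p).1 := by
  have hidx : ∀ {ip a}, a ∈ μ ip → (h a).i = ip.1 ∧ (h a).p = ip.2 := fun {_ a} ha => by
    have hmem := (h a).ha
    rw [hsec a] at hmem
    exact Prod.ext_iff.1 (hμ.eq_of_mem_of_mem hmem ha)
  have hrow : ∀ {i p q a b}, a ∈ μ (i, p) → b ∈ μ (i, q) → (h a).v = (h b).v := fun ha hb =>
    hμ.eq_of_fiber Prod.fst (gridGraph_induce_fst_preconnected k K)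
      (fun _ _ hvw _ ha _ hb hab =>
        (hh.mStruct_of_adj hab).1 ((hidx ha).1.trans (hvw.trans (hidx hb).1.symm))) ha hb rfl
  have hcol : ∀ {i j p a b}, a ∈ μ (i, p) → b ∈ μ (j, p) → (h a).e = (h b).e := fun ha hb =>
    hμ.eq_of_fiber Prod.snd (gridGraph_induce_snd_preconnected k K)
      (fun _ _ hvw _ ha _ hb hab =>
        (hh.mStruct_of_adj hab).2 ((hidx ha).2.trans (hvw.trans (hidx hb).2.symm))) ha hb rfl
  let rep : Fin k × Fin K → A := fun ip => (hμ.1 ip).1.some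
  have hrep : ∀ ip, rep ip ∈ μ ip := fun ip => (hμ.1 ip).1.some_mem
  let i₀ : Fin k := Classical.arbitrary _
  let p₀ : Fin K := Classical.arbitrary _
  refine ⟨fun i => (h (rep (i, p₀))).v, fun p => (h (rep (i₀, p))).e,
    fun p => (h _).he, fun i p => ?_⟩
  have hvi := (h (rep (i, p))).hvi
  rwa [hrow (hrep (i, p)) (hrep (i, p₀)), hcol (hrep (i, p)) (hrep (i₀, p)),
    (hidx (hrep (i, p))).1, (hidx (hrep (i, p))).2] at hvi

end Construction

theorem grohe_soundness_general
    {σ : Type} {ar : σ → ℕ} {A V : Type} [Finite A]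
    (SA : RelStruct σ ar A) (G : SimpleGraph V)
    (k K : ℕ) (hk : 2 ≤ k)
    (ρ₂ : Fin K ≃ {s : Finset (Fin k) // s.card = 2})
    (hcore : IsCore SA)
    (μ : Fin k × Fin K → Set A)
    (hμ : IsMinorMap (gridGraph k K) (Gaifman SA) μ)
    (hhom : ∃ f : A → MElem G k K ρ₂ μ, IsHom SA (MStruct SA G k K ρ₂ μ) f) :
    HasNClique G k := by
  obtain ⟨h, hh⟩ := hhom
  obtain ⟨h', hh', hsec⟩ := hcore.exists_isHom_mStruct_section hh
  have h01 : (⟨0, by omega⟩ : Fin k) ≠ ⟨1, by omega⟩ := by simp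
  obtain ⟨p₀, -⟩ := exists_index_eq_pair ρ₂ h01
  have : Nonempty (Fin k) := ⟨⟨0, by omega⟩⟩
  have : Nonempty (Fin K) := ⟨p₀⟩
  obtain ⟨w, e, he, hwe⟩ := exists_incidence_of_section hμ hh' hsec
  exact hasNClique_of_incidence ρ₂ hk he hwe

/-- Lemma 3.2 (Grohe's soundness lemma). If `A` is a connected core and
there is a homomorphism from `A` to `M = M(A, μ, G)`, then `G` contains a clique of
size `k`. -/
theorem grohe_soundness
    {σ : Type} {ar : σ → ℕ} {A V : Type} [Finite σ] [Finite A] [Finite V]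
    (SA : RelStruct σ ar A) (G : SimpleGraph V)
    (k K : ℕ) (hk : 2 ≤ k) (hK : K = k * (k - 1) / 2)
    (ρ₂ : Fin K ≃ {s : Finset (Fin k) // s.card = 2})
    (hconn : (Gaifman SA).Connected)
    (hcore : IsCore SA)
    (μ : Fin k × Fin K → Set A)
    (hμ : IsMinorMap (gridGraph k K) (Gaifman SA) μ)
    (honto : ∀ a : A, ∃ ip : Fin k × Fin K, a ∈ μ ip)
    (hhom : ∃ f : A → MElem G k K ρ₂ μ, IsHom SA (MStruct SA G k K ρ₂ μ) f) :
    HasNClique G k :=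
  grohe_soundness_general SA G k K hk ρ₂ hcore μ hμ hhom
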